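/- arXiv:1806.00040 — 4 statements merged into one kernel-verified Lean document; each statement's English description precedes it below -/
import Mathlib

section
/- Let $X \sim \mathcal{N}(0, I_d)$, let $\beta \in \mathbb{R}^d$, let $\eta \sim \mathcal{N}(0,\sigma^2)$ be independent of $X$, and set $y = \beta \cdot X + \eta$ and $\sigma_y^2 = \|\beta\|_2^2 + \sigma^2$. Then for any unit vector $v \in \mathbb{R}^d$, the random variable $(v \cdot X)\, y$ has the same distribution as $\frac{v\cdot\beta + \sigma_y}{2} Z_1^2 + \frac{v\cdot\beta - \sigma_y}{2} Z_2^2$, where $Z_1, Z_2$ are independent standard Gaussians. -/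
open MeasureTheory ProbabilityTheory Real
open scoped NNReal

/-!
Put `W = (η/σ, X)`, a standard Gaussian vector in `ℝ^(d+1)`. With `p = (0, v)` and `q = (σ, β)`
we have `v·X = ⟪p, W⟫`, `y = ⟪q, W⟫`, `‖p‖ = 1` and `‖q‖ = σ_y`. For `r = ‖p‖`, `s = ‖q‖`,
the vectors `u₁ = s p + r q` and `u₂ = s p - r q` are orthogonal,
`4 r s ⟪p, W⟫ ⟪q, W⟫ = ⟪u₁, W⟫² - ⟪u₂, W⟫²` and `‖u₁‖², ‖u₂‖² = 2 r s (r s ± ⟪p, q⟫)`.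
Since the law of `W` does not depend on the orthonormal basis, the coordinates of `W` along
`u₁/‖u₁‖` and `u₂/‖u₂‖` are independent standard Gaussians.
-/

open scoped RealInnerProductSpace

lemma MeasureTheory.Measure.map_prodMk_eval_pi {ι : Type*} [Fintype ι] {α : ι → Type*}
    [∀ i, MeasurableSpace (α i)] (μ : (i : ι) → Measure (α i)) [∀ i, IsProbabilityMeasure (μ i)]
    {i j : ι} (hij : i ≠ j) :
    (Measure.pi μ).map (fun x => (x i, x j)) = (μ i).prod (μ j) := by
  have hind : IndepFun (fun x : (∀ k, α k) => x i) (fun x => x j) (Measure.pi μ) :=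
    (iIndepFun_pi (X := fun k (a : α k) => a) fun k => aemeasurable_id).indepFun hij
  rw [hind.map_prod_eq_prod_map_map (measurable_pi_apply i).aemeasurable
    (measurable_pi_apply j).aemeasurable,
    (measurePreserving_eval μ i).map_eq, (measurePreserving_eval μ j).map_eq]

lemma EuclideanSpace.inner_toLp_cons {n : ℕ} (a b : ℝ) (x y : Fin n → ℝ) :
    ⟪WithLp.toLp 2 (Fin.cons a x : Fin (n + 1) → ℝ), WithLp.toLp 2 (Fin.cons b y)⟫ =
      a * b + ∑ i, x i * y i := by
  simp [PiLp.inner_apply, Fin.sum_univ_succ, mul_comm]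

lemma EuclideanSpace.norm_toLp_cons {n : ℕ} (a : ℝ) (x : Fin n → ℝ) :
    ‖WithLp.toLp 2 (Fin.cons a x : Fin (n + 1) → ℝ)‖ = √(a ^ 2 + ∑ i, x i ^ 2) := by
  simp only [norm_eq_sqrt_real_inner, EuclideanSpace.inner_toLp_cons, sq]

namespace ProbabilityTheory

section stdGaussian

variable {E : Type*} [NormedAddCommGroup E] [InnerProductSpace ℝ E] [FiniteDimensional ℝ E]
  [MeasurableSpace E] [BorelSpace E]

lemma stdGaussian_map_inner_prodMk_inner {a b : E} (hab : Orthonormal ℝ ![a, b]) :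
    (stdGaussian E).map (fun z => (⟪a, z⟫, ⟪b, z⟫)) =
      (gaussianReal 0 1).prod (gaussianReal 0 1) := by
  obtain ⟨u, B, hsub, hB⟩ := ((orthonormal_subtype_range hab.linearIndependent.injective).mpr
    hab).exists_orthonormalBasis_extension
  have ha : a ∈ u := hsub ⟨0, rfl⟩
  have hb : b ∈ u := hsub ⟨1, rfl⟩
  have hne : (⟨a, ha⟩ : u) ≠ ⟨b, hb⟩ := fun h =>
    zero_ne_one (hab.linearIndependent.injective (Subtype.ext_iff.mp h))
  have hcoord (i : u) (x : u → ℝ) : ⟪(i : E), ∑ j, x j • B j⟫ = x i := by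
    simpa [hB] using B.orthonormal.inner_right_fintype x i
  rw [stdGaussian_eq_map_pi_orthonormalBasis B, Measure.map_map (by fun_prop) (by fun_prop),
    ← Measure.map_prodMk_eval_pi (fun _ : u => gaussianReal 0 1) hne]
  congr 1
  funext x
  exact Prod.ext (hcoord ⟨a, ha⟩ x) (hcoord ⟨b, hb⟩ x)

lemma stdGaussian_map_inner_mul_inner {p q : E} (hpq : |⟪p, q⟫| < ‖p‖ * ‖q‖) :
    (stdGaussian E).map (fun z => ⟪p, z⟫ * ⟪q, z⟫) =
      ((gaussianReal 0 1).prod (gaussianReal 0 1)).map (fun w =>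
        (⟪p, q⟫ + ‖p‖ * ‖q‖) / 2 * w.1 ^ 2 + (⟪p, q⟫ - ‖p‖ * ‖q‖) / 2 * w.2 ^ 2) := by
  set r := ‖p‖
  set s := ‖q‖
  set c := ⟪p, q⟫
  have hrs : 0 < r * s := (abs_nonneg _).trans_lt hpq
  obtain ⟨hc₁, hc₂⟩ := abs_lt.mp hpq
  set u₁ := s • p + r • q
  set u₂ := s • p - r • q
  have hu₁ : ‖u₁‖ ^ 2 = 2 * (r * s) * (r * s + c) := by
    rw [norm_add_sq_real, norm_smul, norm_smul, real_inner_smul_left, real_inner_smul_right]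
    simp only [norm_norm, r, s]
    ring
  have hu₂ : ‖u₂‖ ^ 2 = 2 * (r * s) * (r * s - c) := by
    rw [norm_sub_sq_real, norm_smul, norm_smul, real_inner_smul_left, real_inner_smul_right]
    simp only [norm_norm, r, s]
    ring
  have hu₁₂ : ⟪u₁, u₂⟫ = 0 := by
    simp only [u₁, u₂, inner_add_left, inner_sub_right, real_inner_smul_left,
      real_inner_smul_right, real_inner_self_eq_norm_sq, real_inner_comm p q, norm_smul, r, s,
      norm_norm]
    ring
  have hu₁0 : 0 < ‖u₁‖ := by nlinarith [norm_nonneg u₁]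
  have hu₂0 : 0 < ‖u₂‖ := by nlinarith [norm_nonneg u₂]
  set a := ‖u₁‖⁻¹ • u₁
  set b := ‖u₂‖⁻¹ • u₂
  have hab : Orthonormal ℝ ![a, b] := by
    rw [orthonormal_iff_ite]
    simp [Fin.forall_fin_two, a, b, real_inner_smul_left, real_inner_smul_right, hu₁₂,
      real_inner_comm u₁ u₂, hu₁0.ne', hu₂0.ne', sq]
  have hpolar (z : E) :
      ⟪p, z⟫ * ⟪q, z⟫ = (c + r * s) / 2 * ⟪a, z⟫ ^ 2 + (c - r * s) / 2 * ⟪b, z⟫ ^ 2 := by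
    have hr : r ≠ 0 := left_ne_zero_of_mul hrs.ne'
    have hs : s ≠ 0 := right_ne_zero_of_mul hrs.ne'
    have hplus : r * s + c ≠ 0 := by linarith
    have hminus : r * s - c ≠ 0 := by linarith
    simp only [a, b, u₁, u₂, real_inner_smul_left, inner_add_left, inner_sub_left, mul_pow,
      inv_pow, hu₁, hu₂]
    field_simp
    ring
  rw [← stdGaussian_map_inner_prodMk_inner hab, Measure.map_map (by fun_prop) (by fun_prop)]
  exact congrArg (Measure.map · _) (funext hpolar)

end stdGaussian

lemma HasLaw.toLp_cons_stdGaussian {Ω : Type*} [MeasurableSpace Ω] {P : Measure Ω} {n : ℕ}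
    {Z : Ω → ℝ} {X : Ω → Fin n → ℝ} (hZ : HasLaw Z (gaussianReal 0 1) P)
    (hX : HasLaw X (Measure.pi fun _ => gaussianReal 0 1) P) (hind : IndepFun Z X P) :
    HasLaw (fun ω => WithLp.toLp 2 (Fin.cons (Z ω) (X ω) : Fin (n + 1) → ℝ))
      (stdGaussian (EuclideanSpace ℝ (Fin (n + 1)))) P := by
  have := hZ.isProbabilityMeasure
  have hcons : MeasurePreserving
      (fun w : ℝ × (Fin n → ℝ) => (Fin.cons w.1 w.2 : Fin (n + 1) → ℝ))
      ((gaussianReal 0 1).prod (Measure.pi fun _ => gaussianReal 0 1))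
      (Measure.pi fun _ => gaussianReal 0 1) := by
    convert (measurePreserving_piFinSuccAbove (fun _ : Fin (n + 1) => gaussianReal 0 1) 0).symm
    simp [Fin.consEquiv]
  have htoLp : MeasurePreserving (WithLp.toLp 2)
      (Measure.pi fun _ : Fin (n + 1) => gaussianReal 0 1)
      (stdGaussian (EuclideanSpace ℝ (Fin (n + 1)))) :=
    ⟨by fun_prop, map_pi_eq_stdGaussian⟩
  exact (htoLp.comp hcons).comp_hasLaw (hind.hasLaw_prod hZ hX)

lemma gaussianReal_div_stdDev {Ω : Type*} [MeasurableSpace Ω] {P : Measure Ω} {X : Ω → ℝ}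
    {σ : ℝ≥0} (hX : HasLaw X (gaussianReal 0 (σ ^ 2)) P) (hσ : σ ≠ 0) :
    HasLaw (fun ω => X ω / σ) (gaussianReal 0 1) P := by
  convert gaussianReal_div_const hX (σ : ℝ) using 2
  · simp
  · ext
    simp [hσ]

end ProbabilityTheory

theorem stmt1_general {d : ℕ} {Ω : Type*} [MeasureSpace Ω]
    [IsProbabilityMeasure (ℙ : Measure Ω)]
    (β v : Fin d → ℝ) (hv : ∑ i, v i ^ 2 = 1) (σ : ℝ≥0) (hσ : 0 < σ)
    (X : Ω → (Fin d → ℝ)) (η : Ω → ℝ)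
    (hX : Measure.map X ℙ = Measure.pi fun _ => gaussianReal 0 1)
    (hη : Measure.map η ℙ = gaussianReal 0 (σ ^ 2))
    (hind : IndepFun X η ℙ)
    (y : Ω → ℝ) (hy : ∀ ω, y ω = (∑ i, β i * X ω i) + η ω)
    (σy : ℝ) (hσy : σy = Real.sqrt ((∑ i, β i ^ 2) + (σ : ℝ) ^ 2)) :
    Measure.map (fun ω => (∑ i, v i * X ω i) * y ω) ℙ =
      Measure.map (fun z : ℝ × ℝ =>
          ((∑ i, v i * β i) + σy) / 2 * z.1 ^ 2 + ((∑ i, v i * β i) - σy) / 2 * z.2 ^ 2)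
        ((gaussianReal 0 1).prod (gaussianReal 0 1)) := by
  let p : EuclideanSpace ℝ (Fin (d + 1)) := WithLp.toLp 2 (Fin.cons 0 v)
  let q : EuclideanSpace ℝ (Fin (d + 1)) := WithLp.toLp 2 (Fin.cons (σ : ℝ) β)
  let W ω : EuclideanSpace ℝ (Fin (d + 1)) := WithLp.toLp 2 (Fin.cons (η ω / σ) (X ω))
  have hp : ‖p‖ = 1 := by simp [p, EuclideanSpace.norm_toLp_cons, hv]
  have hq : ‖q‖ = σy := by simp [q, EuclideanSpace.norm_toLp_cons, hσy, add_comm]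
  have hpq : ⟪p, q⟫ = ∑ i, v i * β i := by simp [p, q, EuclideanSpace.inner_toLp_cons]
  have hcs : |⟪p, q⟫| < ‖p‖ * ‖q‖ := by
    have hvβ : (∑ i, v i * β i) ^ 2 ≤ ∑ i, β i ^ 2 := by
      simpa [hv] using Finset.sum_mul_sq_le_sq_mul_sq Finset.univ v β
    rw [hpq, hp, hq, one_mul, hσy]
    refine abs_lt_of_sq_lt_sq ?_ (Real.sqrt_nonneg _)
    rw [Real.sq_sqrt (by positivity)]
    linarith [pow_pos (NNReal.coe_pos.mpr hσ) 2]
  have hZ : HasLaw (fun ω => η ω / σ) (gaussianReal 0 1) ℙ :=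
    gaussianReal_div_stdDev ⟨.of_map_ne_zero (hη ▸ IsProbabilityMeasure.ne_zero _), hη⟩ hσ.ne'
  have hW : HasLaw W (stdGaussian _) ℙ :=
    hZ.toLp_cons_stdGaussian ⟨.of_map_ne_zero (hX ▸ IsProbabilityMeasure.ne_zero _), hX⟩
      (hind.symm.comp (measurable_id.div_const _) measurable_id)
  have hprod (ω : Ω) : (∑ i, v i * X ω i) * y ω = ⟪p, W ω⟫ * ⟪q, W ω⟫ := by
    have hσ₀ : (σ : ℝ) ≠ 0 := NNReal.coe_ne_zero.mpr hσ.ne'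
    simp [p, q, W, EuclideanSpace.inner_toLp_cons, hy, mul_div_cancel₀ _ hσ₀, add_comm]
  have hlaw : HasLaw (fun ω => ⟪p, W ω⟫ * ⟪q, W ω⟫)
      ((stdGaussian _).map fun z => ⟪p, z⟫ * ⟪q, z⟫) ℙ :=
    HasLaw.fun_comp (Y := fun z => ⟪p, z⟫ * ⟪q, z⟫) ⟨by fun_prop, rfl⟩ hW
  rw [funext hprod, hlaw.map_eq, stdGaussian_map_inner_mul_inner hcs, hpq, hp, hq, one_mul]

/-- If `X ~ N(0, I_d)`, `η ~ N(0, σ²)` is independent of `X`, `y = β·X + η` and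
`σ_y² = ‖β‖² + σ²`, then for any unit vector `v`, the law of `(v·X) y` equals the law of
`((v·β + σ_y)/2) Z₁² + ((v·β − σ_y)/2) Z₂²` for independent standard Gaussians `Z₁, Z₂`. -/
theorem stmt1 {d : ℕ} (hd : 1 ≤ d) {Ω : Type*} [MeasureSpace Ω]
    [IsProbabilityMeasure (ℙ : Measure Ω)]
    (β v : Fin d → ℝ) (hv : ∑ i, v i ^ 2 = 1) (σ : ℝ≥0) (hσ : 0 < σ)
    (X : Ω → (Fin d → ℝ)) (η : Ω → ℝ)
    (hX : Measure.map X ℙ = Measure.pi fun _ => gaussianReal 0 1)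
    (hη : Measure.map η ℙ = gaussianReal 0 (σ ^ 2))
    (hind : IndepFun X η ℙ)
    (y : Ω → ℝ) (hy : ∀ ω, y ω = (∑ i, β i * X ω i) + η ω)
    (σy : ℝ) (hσy : σy = Real.sqrt ((∑ i, β i ^ 2) + (σ : ℝ) ^ 2)) :
    Measure.map (fun ω => (∑ i, v i * X ω i) * y ω) ℙ =
      Measure.map (fun z : ℝ × ℝ =>
          ((∑ i, v i * β i) + σy) / 2 * z.1 ^ 2 + ((∑ i, v i * β i) - σy) / 2 * z.2 ^ 2)
        ((gaussianReal 0 1).prod (gaussianReal 0 1)) :=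
  stmt1_general β v hv σ hσ X η hX hη hind y hy σy hσy
end

section
/- For any pair of real random variables $A, B$ on a common probability space, any integers $a \leq b$, and any $T \in \mathbb{R}$, we have $\Pr[|AB| \geq T] \leq \sum_{i=a}^{b} \Pr[(|A| \geq 2^i) \wedge (|B| \geq T/2^{i+1})] + \Pr[|A| \geq 2^b] + \Pr[|B| \geq T/2^a]$. -/
/-!
Split the event `T ≤ |A| |B|` according to the dyadic scale `2^i ≤ |A| < 2^(i+1)` of `|A|`.
At scale `i` one has `|B| > T / 2^(i+1)`; scales above `b` are caught by `|A| ≥ 2^b`, and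
scales below `a` force `|B| > T / 2^(i+1) ≥ T / 2^a`. A union bound finishes.
-/

open MeasureTheory

section DyadicScale

variable {K : Type*} [Field K] [LinearOrder K] [IsStrictOrderedRing K] [Archimedean K]

theorem exists_scale_or_le_of_le_mul {c x y T : K} (hc : 1 < c) (hy : 0 ≤ y) (hT : T ≤ x * y)
    (a b : ℤ) :
    (∃ i ∈ Finset.Icc a b, c ^ i ≤ x ∧ T / c ^ (i + 1) ≤ y) ∨ c ^ b ≤ x ∨ T / c ^ a ≤ y := by
  by_contra! ⟨hscale, hxb, hya⟩
  have hc₀ : 0 < c := zero_lt_one.trans hc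
  have hT₀ : 0 < T := (div_pos_iff_of_pos_right (zpow_pos hc₀ a)).mp (hy.trans_lt hya)
  have hx₀ : 0 < x := pos_of_mul_pos_left (hT₀.trans_le hT) hy
  have hy₀ : 0 < y := pos_of_mul_pos_right (hT₀.trans_le hT) hx₀.le
  obtain ⟨i, hci, hxi⟩ := exists_mem_Ico_zpow hx₀ hc
  have hyi : T / c ^ (i + 1) < y := by
    rw [div_lt_iff₀ (zpow_pos hc₀ _), mul_comm y]
    calc T ≤ x * y := hT
      _ < c ^ (i + 1) * y := by gcongr
  have hib : i ≤ b := ((zpow_lt_zpow_iff_right₀ hc).mp (hci.trans_lt hxb)).le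
  have hai : a ≤ i := by
    by_contra! hia
    have : T / c ^ a ≤ T / c ^ (i + 1) := by
      gcongr
      · exact hc.le
      · exact hia
    exact lt_asymm hya (this.trans_lt hyi)
  exact (hscale i (Finset.mem_Icc.mpr ⟨hai, hib⟩) hci).not_ge hyi.le

end DyadicScale

theorem stmt2_general {Ω : Type*} [MeasurableSpace Ω] (P : Measure Ω)
    (A B : Ω → ℝ) (a b : ℤ) (T : ℝ) :
    P {ω | T ≤ |A ω * B ω|} ≤
      (∑ i ∈ Finset.Icc a b,
          P {ω | (2 : ℝ) ^ i ≤ |A ω| ∧ T / (2 : ℝ) ^ (i + 1) ≤ |B ω|})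
        + P {ω | (2 : ℝ) ^ b ≤ |A ω|} + P {ω | T / (2 : ℝ) ^ a ≤ |B ω|} := by
  have hcover : {ω | T ≤ |A ω * B ω|} ⊆
      ((⋃ i ∈ Finset.Icc a b, {ω | (2 : ℝ) ^ i ≤ |A ω| ∧ T / (2 : ℝ) ^ (i + 1) ≤ |B ω|})
        ∪ {ω | (2 : ℝ) ^ b ≤ |A ω|}) ∪ {ω | T / (2 : ℝ) ^ a ≤ |B ω|} := by
    intro ω hω
    rw [Set.mem_ofPred_eq, abs_mul] at hω
    rcases exists_scale_or_le_of_le_mul one_lt_two (abs_nonneg _) hω a b with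
      ⟨i, hi, hscale⟩ | hA | hB
    · exact Or.inl (Or.inl (Set.mem_biUnion hi hscale))
    · exact Or.inl (Or.inr hA)
    · exact Or.inr hB
  calc P {ω | T ≤ |A ω * B ω|}
      ≤ P ((⋃ i ∈ Finset.Icc a b, {ω | (2 : ℝ) ^ i ≤ |A ω| ∧ T / (2 : ℝ) ^ (i + 1) ≤ |B ω|})
          ∪ {ω | (2 : ℝ) ^ b ≤ |A ω|}) + P {ω | T / (2 : ℝ) ^ a ≤ |B ω|} :=
        (measure_mono hcover).trans (measure_union_le _ _)
    _ ≤ _ := by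
        gcongr
        exact (measure_union_le _ _).trans (by gcongr; exact measure_biUnion_finset_le _ _)

/-- For real random variables `A, B`, integers `a ≤ b` and `T ∈ ℝ`,
`Pr[|AB| ≥ T] ≤ ∑_{i=a}^{b} Pr[|A| ≥ 2^i ∧ |B| ≥ T/2^{i+1}] + Pr[|A| ≥ 2^b] + Pr[|B| ≥ T/2^a]`. -/
theorem stmt2 {Ω : Type*} [MeasurableSpace Ω] (P : Measure Ω) [IsProbabilityMeasure P]
    (A B : Ω → ℝ) (a b : ℤ) (hab : a ≤ b) (T : ℝ) :
    P {ω | T ≤ |A ω * B ω|} ≤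
      (∑ i ∈ Finset.Icc a b,
          P {ω | (2 : ℝ) ^ i ≤ |A ω| ∧ T / (2 : ℝ) ^ (i + 1) ≤ |B ω|})
        + P {ω | (2 : ℝ) ^ b ≤ |A ω|} + P {ω | T / (2 : ℝ) ^ a ≤ |B ω|} :=
  stmt2_general P A B a b T
end

section
/- Let $\mu_1, \mu_2 \in \mathbb{R}$ and $\sigma_1, \sigma_2 > 0$ with $\sigma_1^2 + \sigma_2^2 > \sigma_1^2\sigma_2^2$. Then the correlation of $\mathcal{N}(\mu_1,\sigma_1^2)$ and $\mathcal{N}(\mu_2,\sigma_2^2)$ relative to $\mathcal{N}(0,1)$ satisfies $\chi_{\mathcal{N}(0,1)}(\mathcal{N}(\mu_1,\sigma_1^2), \mathcal{N}(\mu_2,\sigma_2^2)) = \frac{\exp\left(-\frac{\mu_1^2(\sigma_2^2-1) + 2\mu_1\mu_2 + \mu_2^2(\sigma_1^2-1)}{2\sigma_1^2(\sigma_2^2-1) - 2\sigma_2^2}\right)}{\sqrt{\sigma_1^2 + \sigma_2^2 - \sigma_1^2\sigma_2^2}} - 1$. -/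
/-! The integrand `p q / g` is itself an unnormalised Gaussian `exp (-b x² + l x + c)` with
`b = (1/σ₁² + 1/σ₂² - 1) / 2`, which is positive exactly when `σ₁² + σ₂² > σ₁² σ₂²`. Completing the
square reduces its integral to `∫ exp (-b x²) = √(π / b)`. -/

open MeasureTheory Real

/-- Density of the one-dimensional Gaussian with mean `μ` and variance `v`. -/
noncomputable def gaussPdf (μ v x : ℝ) : ℝ :=
  (Real.sqrt (2 * Real.pi * v))⁻¹ * Real.exp (-(x - μ) ^ 2 / (2 * v))

theorem integral_exp_neg_mul_sq_add_mul_add {b : ℝ} (hb : b ≠ 0) (l c : ℝ) :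
    ∫ x, exp (-b * x ^ 2 + l * x + c) = √(π / b) * exp (l ^ 2 / (4 * b) + c) := by
  have complete_square : ∀ x, exp (-b * x ^ 2 + l * x + c)
      = exp (l ^ 2 / (4 * b) + c) * exp (-b * (x - l / (2 * b)) ^ 2) := by
    intro x
    rw [← exp_add]
    congr 1
    field_simp
    ring
  simp_rw [complete_square]
  rw [integral_const_mul, integral_sub_right_eq_self (fun x => exp (-b * x ^ 2)),
    integral_gaussian, mul_comm]

theorem gaussPdf_eq_mul_exp (μ v x : ℝ) :
    gaussPdf μ v x =
      (√(2 * π * v))⁻¹ * exp (-(2 * v)⁻¹ * x ^ 2 + μ / v * x - μ ^ 2 / (2 * v)) := by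
  unfold gaussPdf
  congr 2
  ring

theorem gaussPdf_mul_gaussPdf_div_gaussPdf_zero_one (μ1 μ2 v1 v2 x : ℝ) :
    gaussPdf μ1 v1 x * gaussPdf μ2 v2 x / gaussPdf 0 1 x
      = √(2 * π) / (√(2 * π * v1) * √(2 * π * v2)) *
        exp (-((2 * v1)⁻¹ + (2 * v2)⁻¹ - 2⁻¹) * x ^ 2 + (μ1 / v1 + μ2 / v2) * x
          + -(μ1 ^ 2 / (2 * v1) + μ2 ^ 2 / (2 * v2))) := by
  simp only [gaussPdf_eq_mul_exp]
  have hexp : exp (-(2 * v1)⁻¹ * x ^ 2 + μ1 / v1 * x - μ1 ^ 2 / (2 * v1)) *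
      exp (-(2 * v2)⁻¹ * x ^ 2 + μ2 / v2 * x - μ2 ^ 2 / (2 * v2))
      = exp (-((2 * v1)⁻¹ + (2 * v2)⁻¹ - 2⁻¹) * x ^ 2 + (μ1 / v1 + μ2 / v2) * x
          + -(μ1 ^ 2 / (2 * v1) + μ2 ^ 2 / (2 * v2))) *
        exp (-(2 * 1)⁻¹ * x ^ 2 + 0 / 1 * x - 0 ^ 2 / (2 * 1)) := by
    rw [← exp_add, ← exp_add]; congr 1; ring
  rw [mul_mul_mul_comm, hexp]
  field_simp

theorem sqrt_two_pi_div_mul_sqrt_pi_div {v1 v2 : ℝ} (hv1 : 0 < v1) (hv2 : 0 < v2) :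
    √(2 * π) / (√(2 * π * v1) * √(2 * π * v2)) * √(π / ((2 * v1)⁻¹ + (2 * v2)⁻¹ - 2⁻¹))
      = (√(v1 + v2 - v1 * v2))⁻¹ := by
  rw [← sqrt_mul (by positivity), ← sqrt_div (by positivity), ← sqrt_mul (by positivity),
    ← sqrt_inv]
  congr 1
  field_simp
  ring

theorem inv_two_mul_add_inv_two_mul_sub_inv_two {v1 v2 : ℝ} (hv1 : v1 ≠ 0) (hv2 : v2 ≠ 0) :
    (2 * v1)⁻¹ + (2 * v2)⁻¹ - 2⁻¹ = (v1 + v2 - v1 * v2) / (2 * v1 * v2) := by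
  field_simp
  ring

theorem sq_div_four_mul_sub_sq_div_two_mul_eq {μ1 μ2 v1 v2 : ℝ} (hv1 : v1 ≠ 0) (hv2 : v2 ≠ 0)
    (hD : v1 + v2 - v1 * v2 ≠ 0) :
    (μ1 / v1 + μ2 / v2) ^ 2 / (4 * ((2 * v1)⁻¹ + (2 * v2)⁻¹ - 2⁻¹))
        + -(μ1 ^ 2 / (2 * v1) + μ2 ^ 2 / (2 * v2))
      = -((μ1 ^ 2 * (v2 - 1) + 2 * μ1 * μ2 + μ2 ^ 2 * (v1 - 1)) /
          (2 * v1 * (v2 - 1) - 2 * v2)) := by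
  rw [inv_two_mul_add_inv_two_mul_sub_inv_two hv1 hv2,
    show 2 * v1 * (v2 - 1) - 2 * v2 = -2 * (v1 + v2 - v1 * v2) by ring]
  field_simp
  ring

theorem stmt7_general (μ1 μ2 σ1 σ2 : ℝ) (h1 : 0 < σ1) (h2 : 0 < σ2)
    (hpos : 0 < σ1 ^ 2 + σ2 ^ 2 - σ1 ^ 2 * σ2 ^ 2) :
    (∫ x : ℝ, gaussPdf μ1 (σ1 ^ 2) x * gaussPdf μ2 (σ2 ^ 2) x / gaussPdf 0 1 x) - 1 =
      Real.exp (-((μ1 ^ 2 * (σ2 ^ 2 - 1) + 2 * μ1 * μ2 + μ2 ^ 2 * (σ1 ^ 2 - 1)) /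
          (2 * σ1 ^ 2 * (σ2 ^ 2 - 1) - 2 * σ2 ^ 2))) /
        Real.sqrt (σ1 ^ 2 + σ2 ^ 2 - σ1 ^ 2 * σ2 ^ 2) - 1 := by
  have hv1 : σ1 ^ 2 ≠ 0 := by positivity
  have hv2 : σ2 ^ 2 ≠ 0 := by positivity
  have hb : (2 * σ1 ^ 2)⁻¹ + (2 * σ2 ^ 2)⁻¹ - 2⁻¹ ≠ 0 := by
    rw [inv_two_mul_add_inv_two_mul_sub_inv_two hv1 hv2]
    positivity
  simp_rw [gaussPdf_mul_gaussPdf_div_gaussPdf_zero_one]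
  rw [integral_const_mul, integral_exp_neg_mul_sq_add_mul_add hb, ← mul_assoc,
    sqrt_two_pi_div_mul_sqrt_pi_div (by positivity) (by positivity),
    sq_div_four_mul_sub_sq_div_two_mul_eq hv1 hv2 hpos.ne', inv_mul_eq_div]

/-- Correlation of two Gaussians relative to `N(0,1)`:
`χ_{N(0,1)}(N(μ₁,σ₁²), N(μ₂,σ₂²)) = exp(−(μ₁²(σ₂²−1) + 2μ₁μ₂ + μ₂²(σ₁²−1)) /
(2σ₁²(σ₂²−1) − 2σ₂²)) / √(σ₁² + σ₂² − σ₁²σ₂²) − 1`,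
where `χ_g(p,q) = ∫ p q / g − 1`. -/
theorem stmt7 (μ1 μ2 σ1 σ2 : ℝ) (h1 : 0 < σ1) (h2 : 0 < σ2)
    (hpos : 0 < σ1 ^ 2 + σ2 ^ 2 - σ1 ^ 2 * σ2 ^ 2)
    (hne : 2 * σ1 ^ 2 * (σ2 ^ 2 - 1) - 2 * σ2 ^ 2 ≠ 0) :
    (∫ x : ℝ, gaussPdf μ1 (σ1 ^ 2) x * gaussPdf μ2 (σ2 ^ 2) x / gaussPdf 0 1 x) - 1 =
      Real.exp (-((μ1 ^ 2 * (σ2 ^ 2 - 1) + 2 * μ1 * μ2 + μ2 ^ 2 * (σ1 ^ 2 - 1)) /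
          (2 * σ1 ^ 2 * (σ2 ^ 2 - 1) - 2 * σ2 ^ 2))) /
        Real.sqrt (σ1 ^ 2 + σ2 ^ 2 - σ1 ^ 2 * σ2 ^ 2) - 1 :=
  stmt7_general μ1 μ2 σ1 σ2 h1 h2 hpos
end

section
/- Let $D$ be a probability distribution on $\mathbb{R}$ such that $\Pr_D[|Z| > T] \leq 2\exp(-T^2/2s^2)$ for all $T > 0$ and some $s > 0$. Let $E$ be an event with $\Pr_D[E] = \alpha \in (0, 1/2]$ and let $D'$ be $D$ conditioned on $E$. Then $\alpha\, \mathbb{E}_{D'}[Z^4] = O(\alpha \log^2(1/\alpha)\, s^4)$. -/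
/-!
Write `ν` for `μ` restricted to `E`. By the layer-cake formula
`∫ x⁴ dν = ∫₀^∞ 4T³ ν{|x| > T} dT`, and `ν{|x| > T}` is at most both `ν ℝ = α` and the
sub-Gaussian tail `2 exp(-T²/2s²)`. Using the first bound below the threshold
`t = s √(2 log(1/α))` and the second above it gives `α t⁴ + 8 (s²t² + 2s⁴) exp(-t²/2s²)`,
and `exp(-t²/2s²) = α` at this threshold, so the total is `α s⁴ (4L² + 16L + 16)` with
`L = log(1/α) ≥ log 2`.
-/

open MeasureTheory Set Filter Topology Real

lemma hasDerivAt_neg_quartic_gaussian_antideriv (s : ℝ) (hs : s ≠ 0) (T : ℝ) :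
    HasDerivAt (fun T : ℝ => -((s ^ 2 * T ^ 2 + 2 * s ^ 4) * exp (-T ^ 2 / (2 * s ^ 2))))
      (T ^ 3 * exp (-T ^ 2 / (2 * s ^ 2))) T := by
  have hexp : HasDerivAt (fun T : ℝ => exp (-T ^ 2 / (2 * s ^ 2)))
      (exp (-T ^ 2 / (2 * s ^ 2)) * (-(2 * T) / (2 * s ^ 2))) T :=
    (((hasDerivAt_pow 2 T).neg).div_const (2 * s ^ 2)).congr_deriv (by ring) |>.exp
  have hpoly : HasDerivAt (fun T : ℝ => s ^ 2 * T ^ 2 + 2 * s ^ 4) (s ^ 2 * (2 * T)) T := by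
    simpa using ((hasDerivAt_pow 2 T).const_mul (s ^ 2)).add_const (2 * s ^ 4)
  refine (hpoly.mul hexp).neg.congr_deriv ?_
  field_simp
  ring

lemma tendsto_quartic_gaussian_antideriv_atTop (s : ℝ) (hs : s ≠ 0) :
    Tendsto (fun T : ℝ => -((s ^ 2 * T ^ 2 + 2 * s ^ 4) * exp (-T ^ 2 / (2 * s ^ 2))))
      atTop (𝓝 0) := by
  have hu : Tendsto (fun T : ℝ => T ^ 2 / (2 * s ^ 2)) atTop atTop :=
    (tendsto_pow_atTop two_ne_zero).atTop_div_const (by positivity)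
  have hexp : Tendsto (fun u : ℝ => -(2 * s ^ 4 * (u ^ 1 * exp (-u)) + 2 * s ^ 4 * exp (-u)))
      atTop (𝓝 0) := by
    simpa using ((tendsto_pow_mul_exp_neg_atTop_nhds_zero 1).const_mul (2 * s ^ 4)).add
      (tendsto_exp_neg_atTop_nhds_zero.const_mul (2 * s ^ 4)) |>.neg
  refine (hexp.comp hu).congr fun T => ?_
  simp only [Function.comp, neg_div]
  field_simp

lemma integral_Ioi_pow_three_mul_exp_neg_sq (s : ℝ) (hs : s ≠ 0) {t : ℝ} (ht : 0 ≤ t) :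
    IntegrableOn (fun T => T ^ 3 * exp (-T ^ 2 / (2 * s ^ 2))) (Ioi t) ∧
      ∫ T in Ioi t, T ^ 3 * exp (-T ^ 2 / (2 * s ^ 2)) =
        (s ^ 2 * t ^ 2 + 2 * s ^ 4) * exp (-t ^ 2 / (2 * s ^ 2)) := by
  have hderiv := fun x (_ : x ∈ Ici t) => hasDerivAt_neg_quartic_gaussian_antideriv s hs x
  have hnonneg : ∀ x ∈ Ioi t, 0 ≤ x ^ 3 * exp (-x ^ 2 / (2 * s ^ 2)) := fun x hx => by
    have : 0 ≤ x := ht.trans hx.out.le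
    positivity
  have hlim := tendsto_quartic_gaussian_antideriv_atTop s hs
  refine ⟨integrableOn_Ioi_deriv_of_nonneg' hderiv hnonneg hlim, ?_⟩
  rw [integral_Ioi_of_hasDerivAt_of_nonneg' hderiv hnonneg hlim]
  ring

lemma lintegral_ofReal_pow_four_eq_lintegral_meas_lt (ν : Measure ℝ) :
    ∫⁻ x, ENNReal.ofReal (x ^ 4) ∂ν =
      ∫⁻ t in Ioi 0, ν {x | t < |x|} * ENNReal.ofReal (4 * t ^ 3) := by
  have hcont : Continuous fun t : ℝ => 4 * t ^ 3 := by fun_prop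
  rw [← lintegral_comp_eq_lintegral_meas_lt_mul ν (ae_of_all _ abs_nonneg)
    measurable_abs.aemeasurable (fun t _ => hcont.intervalIntegrable 0 t)
    ((ae_restrict_iff' measurableSet_Ioi).2 (ae_of_all _ fun t (ht : 0 < t) => by positivity))]
  refine lintegral_congr fun x => ?_
  rw [intervalIntegral.integral_const_mul, integral_pow]
  congr 1
  norm_num [pow_abs, abs_of_nonneg (by positivity : (0 : ℝ) ≤ x ^ 4)]
  ring

lemma lintegral_Ioc_zero_ofReal_four_mul_pow_three {t : ℝ} (ht : 0 ≤ t) :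
    ∫⁻ T in Ioc 0 t, ENNReal.ofReal (4 * T ^ 3) = ENNReal.ofReal (t ^ 4) := by
  have hnonneg : 0 ≤ᵐ[volume.restrict (Ioc 0 t)] fun T : ℝ => 4 * T ^ 3 :=
    (ae_restrict_iff' measurableSet_Ioc).2 (ae_of_all _ fun T hT => by
      have : 0 < T := hT.1
      positivity)
  have hint : IntervalIntegrable (fun T : ℝ => 4 * T ^ 3) volume 0 t :=
    (by fun_prop : Continuous fun T : ℝ => 4 * T ^ 3).intervalIntegrable 0 t
  rw [← ofReal_integral_eq_lintegral_ofReal hint.1 hnonneg,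
    ← intervalIntegral.integral_of_le ht, intervalIntegral.integral_const_mul, integral_pow]
  congr 1
  ring

lemma lintegral_Ioc_meas_lt_mul_le (ν : Measure ℝ) {α t : ℝ} (ht : 0 ≤ t)
    (hmass : ν univ ≤ ENNReal.ofReal α) :
    ∫⁻ T in Ioc 0 t, ν {x | T < |x|} * ENNReal.ofReal (4 * T ^ 3) ≤
      ENNReal.ofReal α * ENNReal.ofReal (t ^ 4) := by
  calc ∫⁻ T in Ioc 0 t, ν {x | T < |x|} * ENNReal.ofReal (4 * T ^ 3)
      ≤ ∫⁻ T in Ioc 0 t, ENNReal.ofReal α * ENNReal.ofReal (4 * T ^ 3) :=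
        lintegral_mono fun T => mul_le_mul_left ((measure_mono (subset_univ _)).trans hmass) _
    _ = ENNReal.ofReal α * ENNReal.ofReal (t ^ 4) := by
        rw [lintegral_const_mul _ (by fun_prop),
          lintegral_Ioc_zero_ofReal_four_mul_pow_three ht]

lemma lintegral_Ioi_meas_lt_mul_le_of_subgaussian (ν : Measure ℝ) {s t : ℝ} (hs : s ≠ 0)
    (ht : 0 ≤ t)
    (htail : ∀ T > 0, ν {x | T < |x|} ≤ ENNReal.ofReal (2 * exp (-T ^ 2 / (2 * s ^ 2)))) :
    ∫⁻ T in Ioi t, ν {x | T < |x|} * ENNReal.ofReal (4 * T ^ 3) ≤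
      ENNReal.ofReal (8 * ((s ^ 2 * t ^ 2 + 2 * s ^ 4) * exp (-t ^ 2 / (2 * s ^ 2)))) := by
  obtain ⟨hint, hval⟩ := integral_Ioi_pow_three_mul_exp_neg_sq s hs ht
  have hnonneg :
      0 ≤ᵐ[volume.restrict (Ioi t)] fun T => 8 * (T ^ 3 * exp (-T ^ 2 / (2 * s ^ 2))) :=
    (ae_restrict_iff' measurableSet_Ioi).2 (ae_of_all _ fun T (hT : t < T) => by
      have : 0 ≤ T := ht.trans hT.le
      positivity)
  calc ∫⁻ T in Ioi t, ν {x | T < |x|} * ENNReal.ofReal (4 * T ^ 3)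
      ≤ ∫⁻ T in Ioi t, ENNReal.ofReal (8 * (T ^ 3 * exp (-T ^ 2 / (2 * s ^ 2)))) := by
        refine setLIntegral_mono (by fun_prop) fun T (hT : t < T) => ?_
        have hT0 : 0 < T := ht.trans_lt hT
        calc ν {x | T < |x|} * ENNReal.ofReal (4 * T ^ 3)
            ≤ ENNReal.ofReal (2 * exp (-T ^ 2 / (2 * s ^ 2))) * ENNReal.ofReal (4 * T ^ 3) :=
              mul_le_mul_left (htail T hT0) _
          _ = ENNReal.ofReal (8 * (T ^ 3 * exp (-T ^ 2 / (2 * s ^ 2)))) := by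
              rw [← ENNReal.ofReal_mul (by positivity)]
              ring_nf
    _ = ENNReal.ofReal (8 * ((s ^ 2 * t ^ 2 + 2 * s ^ 4) * exp (-t ^ 2 / (2 * s ^ 2)))) := by
        rw [← ofReal_integral_eq_lintegral_ofReal (hint.const_mul 8) hnonneg,
          integral_const_mul, hval]

lemma integral_pow_four_le_of_subgaussian (ν : Measure ℝ) {s α t : ℝ} (hs : s ≠ 0)
    (hα : 0 ≤ α) (ht : 0 ≤ t) (hmass : ν univ ≤ ENNReal.ofReal α)
    (htail : ∀ T > 0, ν {x | T < |x|} ≤ ENNReal.ofReal (2 * exp (-T ^ 2 / (2 * s ^ 2)))) :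
    ∫ x, x ^ 4 ∂ν ≤
      α * t ^ 4 + 8 * ((s ^ 2 * t ^ 2 + 2 * s ^ 4) * exp (-t ^ 2 / (2 * s ^ 2))) := by
  rw [integral_eq_lintegral_of_nonneg_ae (ae_of_all _ fun x => by positivity) (by fun_prop)]
  refine ENNReal.toReal_le_of_le_ofReal (by positivity) ?_
  rw [lintegral_ofReal_pow_four_eq_lintegral_meas_lt, ← Ioc_union_Ioi_eq_Ioi ht,
    lintegral_union measurableSet_Ioi (Ioc_disjoint_Ioi le_rfl),
    ENNReal.ofReal_add (by positivity) (by positivity), ENNReal.ofReal_mul hα]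
  exact add_le_add (lintegral_Ioc_meas_lt_mul_le ν ht hmass)
    (lintegral_Ioi_meas_lt_mul_le_of_subgaussian ν hs ht htail)

/-- If `D` is a distribution on `ℝ` with sub-Gaussian tail `Pr[|Z| > T] ≤ 2 exp(−T²/2s²)`,
`E` is an event of probability `α ∈ (0, 1/2]`, and `D'` is `D` conditioned on `E`, then
`α 𝔼_{D'}[Z⁴] = O(α log²(1/α) s⁴)` with an absolute constant; note
`α 𝔼_{D'}[Z⁴] = ∫_E x⁴ dD`. -/
theorem stmt11 : ∃ C > (0 : ℝ), ∀ (μ : Measure ℝ), IsProbabilityMeasure μ →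
    ∀ s : ℝ, 0 < s →
    (∀ T > (0 : ℝ), μ {x | T < |x|} ≤ ENNReal.ofReal (2 * Real.exp (-T ^ 2 / (2 * s ^ 2)))) →
    ∀ E : Set ℝ, MeasurableSet E → ∀ α : ℝ, 0 < α → α ≤ 1 / 2 →
    μ E = ENNReal.ofReal α →
    (∫ x in E, x ^ 4 ∂μ) ≤ C * (α * (Real.log (1 / α)) ^ 2 * s ^ 4) := by
  refine ⟨100, by norm_num, fun μ _ s hs htail E _ α hα hα_le hμE => ?_⟩
  set L := log (1 / α)
  have hL : 0.69 < L := by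
    refine lt_of_lt_of_le ?_ (log_le_log two_pos ((le_div_iff₀ hα).2 (by linarith)))
    linarith [log_two_gt_d9]
  set t := s * √(2 * L)
  have ht_sq : t ^ 2 = 2 * L * s ^ 2 := by
    rw [mul_pow, sq_sqrt (by linarith)]
    ring
  have hexp : exp (-t ^ 2 / (2 * s ^ 2)) = α := by
    rw [ht_sq, show -(2 * L * s ^ 2) / (2 * s ^ 2) = -L by field_simp]
    simp only [L, one_div, log_inv, neg_neg, exp_log hα]
  have hbound := integral_pow_four_le_of_subgaussian (μ.restrict E) (t := t) hs.ne' hα.le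
    (by positivity) (by rw [Measure.restrict_apply_univ, hμE])
    (fun T hT => (Measure.restrict_le_self _).trans (htail T hT))
  rw [hexp, show t ^ 4 = (t ^ 2) ^ 2 by ring, ht_sq] at hbound
  have hpoly : 16 * L + 16 ≤ 96 * L ^ 2 := by nlinarith
  nlinarith [mul_le_mul_of_nonneg_left hpoly (by positivity : 0 ≤ α * s ^ 4)]
end
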